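/- arXiv:1309.5624 — 2 statements merged into one kernel-verified Lean document; each statement's English description precedes it below -/
import Mathlib

section
/- The simple Laguerre functions ℓ_n(x) = e^{-x/2} L_n(x) form an orthonormal system in L²(ℝ₊): ∫₀^∞ ℓ_m(x) ℓ_n(x) dx = δ_{mn}. -/
open MeasureTheory Set

/-- The Laguerre polynomial `L_n(x) = ∑_{j=0}^n (-1)^j/j! C(n,j) x^j`. -/
noncomputable def laguerrePoly (n : ℕ) (x : ℝ) : ℝ :=
  ∑ j ∈ Finset.range (n + 1), (-1) ^ j / (Nat.factorial j : ℝ) * (Nat.choose n j : ℝ) * x ^ j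

/-- The simple Laguerre function `ℓ_n(x) = e^{-x/2} L_n(x)`. -/
noncomputable def laguerreFun (n : ℕ) (x : ℝ) : ℝ :=
  Real.exp (-x / 2) * laguerrePoly n x

/-!
Expanding `ℓ_m ℓ_n = e^{-x} L_m L_n` in the monomials of `L_m` reduces the integral to the moments
`∫₀^∞ e^{-x} x^k L_n(x) dx` with `k ≤ m`. Since `∫₀^∞ e^{-x} x^p dx = p!`, such a moment is
`∑_j (-1)^j C(n,j) (j+1)⋯(j+k)`, that is `(-1)^n` times the `n`-th forward difference at `1` of the
rising factorial `x(x+1)⋯(x+k-1)`, a monic polynomial of degree `k`. It therefore vanishes for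
`k < n` and equals `(-1)^n n!` for `k = n`. For `m ≤ n` only the term `k = m = n` can survive, and it
contributes `(-1)^n/n! · (-1)^n n! = 1`.
-/

open Polynomial fwdDiff

lemma sum_neg_one_pow_mul_choose_mul_eq_fwdDiff_iter {R : Type*} [Ring R] (f : R → R) (n : ℕ) (y : R) :
    ∑ j ∈ Finset.range (n + 1), (-1) ^ j * (n.choose j : R) * f (y + j) =
      (-1) ^ n * (Δ_[1])^[n] f y := by
  rw [fwdDiff_iter_eq_sum_shift, Finset.mul_sum]
  refine Finset.sum_congr rfl fun j hj => ?_
  have hjn : j ≤ n := Nat.lt_succ_iff.mp (Finset.mem_range.mp hj)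
  rw [zsmul_eq_mul, nsmul_one]
  push_cast
  rw [← mul_assoc, ← mul_assoc, ← pow_add, show n + (n - j) = j + 2 * (n - j) by omega,
    pow_add, pow_mul, neg_one_sq, one_pow, mul_one]

lemma integrableOn_exp_neg_mul_pow (p : ℕ) :
    IntegrableOn (fun x : ℝ => Real.exp (-x) * x ^ p) (Ioi 0) := by
  refine (Real.GammaIntegral_convergent (s := p + 1) (by positivity)).congr_fun
    (fun x _ => ?_) measurableSet_Ioi
  simp only [add_sub_cancel_right, Real.rpow_natCast]

lemma integral_exp_neg_mul_pow (p : ℕ) :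
    ∫ x in Ioi (0 : ℝ), Real.exp (-x) * x ^ p = p.factorial := by
  rw [← Real.Gamma_nat_eq_factorial, Real.Gamma_eq_integral (by positivity)]
  refine setIntegral_congr_fun measurableSet_Ioi fun x _ => ?_
  simp only [add_sub_cancel_right, Real.rpow_natCast]

lemma exp_neg_mul_pow_mul_laguerrePoly (n k : ℕ) (x : ℝ) :
    Real.exp (-x) * x ^ k * laguerrePoly n x =
      ∑ j ∈ Finset.range (n + 1),
        (-1) ^ j / (j.factorial : ℝ) * (n.choose j : ℝ) * (Real.exp (-x) * x ^ (k + j)) := by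
  rw [laguerrePoly, Finset.mul_sum]
  refine Finset.sum_congr rfl fun j _ => ?_
  ring

lemma integrableOn_exp_neg_mul_pow_mul_laguerrePoly (n k : ℕ) :
    IntegrableOn (fun x => Real.exp (-x) * x ^ k * laguerrePoly n x) (Ioi 0) := by
  simp_rw [exp_neg_mul_pow_mul_laguerrePoly]
  exact integrable_finsetSum _ fun j _ => (integrableOn_exp_neg_mul_pow _).const_mul _

lemma factorial_mul_eval_ascPochhammer (j k : ℕ) :
    (j.factorial : ℝ) * (ascPochhammer ℝ k).eval (1 + j : ℝ) = (j + k).factorial := by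
  rw [add_comm (1 : ℝ), ← Nat.cast_add_one, ascPochhammer_nat_eq_natCast_ascFactorial,
    ← Nat.cast_mul, Nat.factorial_mul_ascFactorial]

lemma integral_exp_neg_mul_pow_mul_laguerrePoly (n k : ℕ) :
    ∫ x in Ioi (0 : ℝ), Real.exp (-x) * x ^ k * laguerrePoly n x =
      (-1) ^ n * (Δ_[1])^[n] (ascPochhammer ℝ k).eval 1 := by
  simp_rw [exp_neg_mul_pow_mul_laguerrePoly]
  rw [integral_finsetSum _ fun j _ => (integrableOn_exp_neg_mul_pow _).const_mul _,
    ← sum_neg_one_pow_mul_choose_mul_eq_fwdDiff_iter]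
  refine Finset.sum_congr rfl fun j _ => ?_
  rw [integral_const_mul, integral_exp_neg_mul_pow, add_comm k j,
    ← factorial_mul_eval_ascPochhammer j k]
  field_simp

lemma integral_exp_neg_mul_pow_mul_laguerrePoly_of_lt {n k : ℕ} (h : k < n) :
    ∫ x in Ioi (0 : ℝ), Real.exp (-x) * x ^ k * laguerrePoly n x = 0 := by
  rw [integral_exp_neg_mul_pow_mul_laguerrePoly,
    fwdDiff_iter_eq_zero_of_degree_lt ((ascPochhammer_natDegree ℝ k).trans_lt h), Pi.zero_apply,
    mul_zero]

lemma integral_exp_neg_mul_pow_self_mul_laguerrePoly (n : ℕ) :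
    ∫ x in Ioi (0 : ℝ), Real.exp (-x) * x ^ n * laguerrePoly n x = (-1) ^ n * n.factorial := by
  have h := Polynomial.fwdDiff_iter_degree_eq_factorial (ascPochhammer ℝ n)
  rw [ascPochhammer_natDegree, (monic_ascPochhammer ℝ n).leadingCoeff, one_smul] at h
  rw [integral_exp_neg_mul_pow_mul_laguerrePoly, h, Pi.natCast_apply]

lemma laguerreFun_mul_laguerreFun (m n : ℕ) (x : ℝ) :
    laguerreFun m x * laguerreFun n x =
      ∑ k ∈ Finset.range (m + 1), (-1) ^ k / (k.factorial : ℝ) * (m.choose k : ℝ) *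
        (Real.exp (-x) * x ^ k * laguerrePoly n x) := by
  have hexp : Real.exp (-x / 2) * Real.exp (-x / 2) = Real.exp (-x) := by
    rw [← Real.exp_add]; ring_nf
  rw [laguerreFun, laguerreFun, mul_mul_mul_comm, hexp, laguerrePoly, Finset.sum_mul,
    Finset.mul_sum]
  refine Finset.sum_congr rfl fun k _ => ?_
  ring

lemma integral_laguerreFun_mul_laguerreFun (m n : ℕ) :
    ∫ x in Ioi (0 : ℝ), laguerreFun m x * laguerreFun n x =
      ∑ k ∈ Finset.range (m + 1), (-1) ^ k / (k.factorial : ℝ) * (m.choose k : ℝ) *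
        ∫ x in Ioi (0 : ℝ), Real.exp (-x) * x ^ k * laguerrePoly n x := by
  simp_rw [laguerreFun_mul_laguerreFun]
  rw [integral_finsetSum _ fun k _ =>
    (integrableOn_exp_neg_mul_pow_mul_laguerrePoly n k).const_mul _]
  simp_rw [integral_const_mul]

/-- The simple Laguerre functions form an orthonormal system in `L²(ℝ₊)`. -/
theorem laguerre_orthonormal (m n : ℕ) :
    ∫ x in Ioi (0 : ℝ), laguerreFun m x * laguerreFun n x =
      if m = n then 1 else 0 := by
  wlog hmn : m ≤ n generalizing m n
  · simp_rw [mul_comm (laguerreFun m _), eq_comm (a := m)]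
    exact this n m (by omega)
  have lower_moments_vanish : ∀ k ∈ Finset.range m,
      (-1) ^ k / (k.factorial : ℝ) * (m.choose k : ℝ) *
        ∫ x in Ioi (0 : ℝ), Real.exp (-x) * x ^ k * laguerrePoly n x = 0 := fun k hk => by
    rw [integral_exp_neg_mul_pow_mul_laguerrePoly_of_lt
      ((Finset.mem_range.mp hk).trans_le hmn), mul_zero]
  rw [integral_laguerreFun_mul_laguerreFun, Finset.sum_range_succ,
    Finset.sum_eq_zero lower_moments_vanish, zero_add]
  rcases hmn.lt_or_eq with hlt | rfl
  · rw [integral_exp_neg_mul_pow_mul_laguerrePoly_of_lt hlt, mul_zero, if_neg hlt.ne]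
  · rw [integral_exp_neg_mul_pow_self_mul_laguerrePoly, if_pos rfl, Nat.choose_self,
      Nat.cast_one, mul_one]
    field_simp
    rw [← pow_mul, Even.neg_one_pow ⟨m, by omega⟩]
end

section
/- Let a : ℝ₊ → ℝ be nonnegative a.e. and in L₁(ℝ₊,0) (i.e., a(u)e^{−εu} ∈ L₁(ℝ₊) for every ε > 0). If γ_{a,0} is bounded on ℝ₊, then γ_{a,k} is bounded on ℝ₊ for every k ∈ ℤ₊. -/
open MeasureTheory Set Filter Topology

/-! Since `|L_k(x)| ≤ (1 + x)^k` for `x ≥ 0`, the polynomial growth of `L_k²` is absorbed by half of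
the decay of `e^{-x}`: `ℓ_k(x)² ≤ M_k e^{-x/2} = M_k ℓ_0(x/2)²`. Substituting `x = 2uξ` gives
`γ_{a,k}(ξ) ≤ 2 M_k γ_{a,0}(ξ/2)`, so a bound on `γ_{a,0}` bounds every `γ_{a,k}`. -/

theorem abs_laguerrePoly_le (k : ℕ) {x : ℝ} (hx : 0 ≤ x) :
    |laguerrePoly k x| ≤ (1 + x) ^ k := by
  rw [add_comm, add_pow]
  refine (Finset.abs_sum_le_sum_abs _ _).trans (Finset.sum_le_sum fun j _ => ?_)
  have hfact : 1 / (j.factorial : ℝ) ≤ 1 :=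
    div_le_one_of_le₀ (by exact_mod_cast j.factorial_pos) (by positivity)
  rw [abs_mul, abs_mul, abs_div, abs_pow, abs_neg, abs_one, one_pow, abs_pow, abs_of_nonneg hx,
    Nat.abs_cast, Nat.abs_cast, one_pow, mul_one, mul_comm _ (x ^ j)]
  gcongr
  exact mul_le_of_le_one_left (Nat.cast_nonneg _) hfact

theorem one_add_pow_le_exp_half (n : ℕ) {x : ℝ} (hx : 0 ≤ x) :
    (1 + x) ^ n ≤ 2 ^ n * n.factorial * Real.exp (1 / 2) * Real.exp (x / 2) := by
  have h := Real.pow_div_factorial_le_exp (x := (1 + x) / 2) (by positivity) n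
  rw [div_le_iff₀ (by positivity), div_pow, div_le_iff₀ (by positivity)] at h
  calc (1 + x) ^ n ≤ Real.exp ((1 + x) / 2) * n.factorial * 2 ^ n := h
    _ = 2 ^ n * n.factorial * Real.exp (1 / 2) * Real.exp (x / 2) := by
      rw [add_div, Real.exp_add]; ring

theorem exists_laguerreFun_sq_le_mul_exp (k : ℕ) : ∃ M : ℝ, ∀ x : ℝ, 0 ≤ x →
    laguerreFun k x ^ 2 ≤ M * Real.exp (-x / 2) := by
  refine ⟨4 ^ k * (2 * k).factorial * Real.exp (1 / 2), fun x hx => ?_⟩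
  have hpoly : laguerrePoly k x ^ 2 ≤ (1 + x) ^ (2 * k) := by
    rw [← sq_abs, mul_comm, pow_mul]
    exact pow_le_pow_left₀ (abs_nonneg _) (abs_laguerrePoly_le k hx) 2
  have hexp : Real.exp (-x / 2) ^ 2 * Real.exp (x / 2) = Real.exp (-x / 2) := by
    rw [sq, ← Real.exp_add, ← Real.exp_add]; ring_nf
  calc laguerreFun k x ^ 2 = Real.exp (-x / 2) ^ 2 * laguerrePoly k x ^ 2 := mul_pow _ _ _
    _ ≤ Real.exp (-x / 2) ^ 2 *
        (2 ^ (2 * k) * (2 * k).factorial * Real.exp (1 / 2) * Real.exp (x / 2)) := by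
      gcongr; exact hpoly.trans (one_add_pow_le_exp_half _ hx)
    _ = 4 ^ k * (2 * k).factorial * Real.exp (1 / 2) * Real.exp (-x / 2) := by
      rw [pow_mul]; norm_num
      linear_combination (4 ^ k * (2 * k).factorial * Real.exp (1 / 2)) * hexp

theorem laguerreFun_zero_sq (x : ℝ) : laguerreFun 0 x ^ 2 = Real.exp (-x) := by
  simp [laguerreFun, laguerrePoly, sq, ← Real.exp_add]

noncomputable def laguerreGamma (a : ℝ → ℝ) (k : ℕ) (ξ : ℝ) : ENNReal :=
  ENNReal.ofReal (2 * ξ) *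
    ∫⁻ u in Ioi (0 : ℝ), ENNReal.ofReal (a u * (laguerreFun k (2 * u * ξ)) ^ 2)

theorem laguerreGamma_le_of_sq_le {a : ℝ → ℝ} {k : ℕ} {M ξ : ℝ}
    (hpos : ∀ᵐ u ∂(volume.restrict (Ioi (0 : ℝ))), 0 ≤ a u)
    (hk : ∀ x : ℝ, 0 ≤ x → laguerreFun k x ^ 2 ≤ M * Real.exp (-x / 2)) (hξ : 0 ≤ ξ) :
    laguerreGamma a k ξ ≤ ENNReal.ofReal (2 * M) * laguerreGamma a 0 (ξ / 2) := by
  have hpointwise : ∀ᵐ u ∂(volume.restrict (Ioi (0 : ℝ))),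
      ENNReal.ofReal (a u * laguerreFun k (2 * u * ξ) ^ 2) ≤
        ENNReal.ofReal M * ENNReal.ofReal (a u * laguerreFun 0 (2 * u * (ξ / 2)) ^ 2) := by
    filter_upwards [hpos, ae_restrict_mem measurableSet_Ioi] with u hau (hu : 0 < u)
    rw [← ENNReal.ofReal_mul', laguerreFun_zero_sq]
    · refine ENNReal.ofReal_le_ofReal ?_
      calc a u * laguerreFun k (2 * u * ξ) ^ 2 ≤ a u * (M * Real.exp (-(2 * u * ξ) / 2)) := by
            gcongr; exact hk _ (by positivity)
        _ = M * (a u * Real.exp (-(2 * u * (ξ / 2)))) := by ring_nf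
    · exact mul_nonneg hau (sq_nonneg _)
  calc laguerreGamma a k ξ
      ≤ ENNReal.ofReal (2 * ξ) * ∫⁻ u in Ioi (0 : ℝ),
          ENNReal.ofReal M * ENNReal.ofReal (a u * laguerreFun 0 (2 * u * (ξ / 2)) ^ 2) :=
        mul_le_mul_right (lintegral_mono_ae hpointwise) _
    _ = ENNReal.ofReal (2 * M) * laguerreGamma a 0 (ξ / 2) := by
        rw [lintegral_const_mul' _ _ ENNReal.ofReal_ne_top, laguerreGamma,
          show 2 * ξ = 2 * (2 * (ξ / 2)) by ring, ENNReal.ofReal_mul (q := M) zero_le_two,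
          ENNReal.ofReal_mul (q := 2 * (ξ / 2)) zero_le_two]
        ring

theorem gamma_bounded_all_k_of_bounded_k0_general (a : ℝ → ℝ)
    (hpos : ∀ᵐ u ∂(volume.restrict (Ioi (0 : ℝ))), 0 ≤ a u)
    (hbdd : ∃ C : ENNReal, C ≠ ⊤ ∧ ∀ ξ : ℝ, 0 < ξ →
      ENNReal.ofReal (2 * ξ) *
        ∫⁻ u in Ioi (0 : ℝ), ENNReal.ofReal (a u * (laguerreFun 0 (2 * u * ξ)) ^ 2) ≤ C) :
    ∀ k : ℕ, ∃ C : ENNReal, C ≠ ⊤ ∧ ∀ ξ : ℝ, 0 < ξ →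
      ENNReal.ofReal (2 * ξ) *
        ∫⁻ u in Ioi (0 : ℝ), ENNReal.ofReal (a u * (laguerreFun k (2 * u * ξ)) ^ 2) ≤ C := by
  intro k
  obtain ⟨C, hC, hγ₀⟩ := hbdd
  obtain ⟨M, hM⟩ := exists_laguerreFun_sq_le_mul_exp k
  refine ⟨ENNReal.ofReal (2 * M) * C, ENNReal.mul_ne_top ENNReal.ofReal_ne_top hC, fun ξ hξ => ?_⟩
  calc laguerreGamma a k ξ ≤ ENNReal.ofReal (2 * M) * laguerreGamma a 0 (ξ / 2) :=
        laguerreGamma_le_of_sq_le hpos hM hξ.le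
    _ ≤ ENNReal.ofReal (2 * M) * C := by gcongr; exact hγ₀ _ (half_pos hξ)

/-- If `a ≥ 0` a.e. belongs to `L₁(ℝ₊,0)` and `γ_{a,0}` is bounded on `ℝ₊`, then
`γ_{a,k}` is bounded on `ℝ₊` for every `k`, where
`γ_{a,k}(ξ) = 2ξ ∫₀^∞ a(u) ℓ_k(2uξ)² du`. -/
theorem gamma_bounded_all_k_of_bounded_k0 (a : ℝ → ℝ) (hmeas : Measurable a)
    (hpos : ∀ᵐ u ∂(volume.restrict (Ioi (0 : ℝ))), 0 ≤ a u)
    (hL1 : ∀ ε : ℝ, 0 < ε →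
      (∫⁻ u in Ioi (0 : ℝ), ENNReal.ofReal (a u * Real.exp (-ε * u))) < ⊤)
    (hbdd : ∃ C : ENNReal, C ≠ ⊤ ∧ ∀ ξ : ℝ, 0 < ξ →
      ENNReal.ofReal (2 * ξ) *
        ∫⁻ u in Ioi (0 : ℝ), ENNReal.ofReal (a u * (laguerreFun 0 (2 * u * ξ)) ^ 2) ≤ C) :
    ∀ k : ℕ, ∃ C : ENNReal, C ≠ ⊤ ∧ ∀ ξ : ℝ, 0 < ξ →
      ENNReal.ofReal (2 * ξ) *
        ∫⁻ u in Ioi (0 : ℝ), ENNReal.ofReal (a u * (laguerreFun k (2 * u * ξ)) ^ 2) ≤ C :=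
  gamma_bounded_all_k_of_bounded_k0_general a hpos hbdd
end
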